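/- arXiv:2208.14412 — 2 statements merged into one kernel-verified Lean document; each statement's English description precedes it below -/
import Mathlib

section
/- For every two classes of graphs 𝒞 and 𝒟 and every positive integer k: 𝒞 ⊑°_FO 𝒟 if and only if C_k(𝒞) ⊑°_FO C_k(𝒟), where C_k(𝒞) = {C_k(G) : G ∈ 𝒞}. -/
open SimpleGraph

/-! ### Finite graphs and colored graphs -/

/-- A finite simple graph. -/
structure FGraph : Type 1 where
  V : Type
  [fin : Finite V]
  G : SimpleGraph V

attribute [instance] FGraph.fin

/-- A finite simple graph colored by `c` unary predicates. -/
structure CGraph (c : ℕ) : Type 1 where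
  V : Type
  [fin : Finite V]
  G : SimpleGraph V
  color : Fin c → Set V

attribute [instance] CGraph.fin

/-! ### First-order formulas over `c`-colored graphs -/

/-- First-order formulas in the language of graphs with `c` unary predicates,
with free variables among `Fin m`. -/
inductive Fml (c : ℕ) : ℕ → Type where
  | eq {m} : Fin m → Fin m → Fml c m
  | adj {m} : Fin m → Fin m → Fml c m
  | col {m} : Fin c → Fin m → Fml c m
  | not {m} : Fml c m → Fml c m
  | or {m} : Fml c m → Fml c m → Fml c m
  | ex {m} : Fml c (m + 1) → Fml c m

/-- Satisfaction of a first-order formula in a colored graph. -/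
def Fml.Sat {c : ℕ} (A : CGraph c) : {m : ℕ} → Fml c m → (Fin m → A.V) → Prop
  | _, .eq i j, v => v i = v j
  | _, .adj i j, v => A.G.Adj (v i) (v j)
  | _, .col i x, v => v x ∈ A.color i
  | _, .not φ, v => ¬ Fml.Sat A φ v
  | _, .or φ ψ, v => Fml.Sat A φ v ∨ Fml.Sat A ψ v
  | _, .ex φ, v => ∃ w : A.V, Fml.Sat A φ (Fin.snoc v w)

/-! ### Simple interpretations and transductions -/

/-- A simple interpretation of graphs in `c`-colored graphs: a pair of formulas
`(ν(x), η(x,y))` with `η` symmetric and anti-reflexive. -/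
structure Interp (c : ℕ) where
  ν : Fml c 1
  η : Fml c 2
  symm : ∀ (A : CGraph c) (u v : A.V), Fml.Sat A η ![u, v] → Fml.Sat A η ![v, u]
  irrefl : ∀ (A : CGraph c) (v : A.V), ¬ Fml.Sat A η ![v, v]

/-- The graph interpreted in a colored graph. -/
def Interp.result {c : ℕ} (I : Interp c) (A : CGraph c) :
    SimpleGraph {v : A.V // Fml.Sat A I.ν ![v]} where
  Adj u v := Fml.Sat A I.η ![u.1, v.1]
  symm := ⟨fun u v h => I.symm A u.1 v.1 h⟩
  loopless := ⟨fun v h => I.irrefl A v.1 h⟩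

/-- The `k`-copy operation on graphs: the copies of a vertex form a clique, and copies
with the same index are adjacent iff the original vertices are. -/
def copyGraph {V : Type} (G : SimpleGraph V) (k : ℕ) : SimpleGraph (V × Fin k) where
  Adj a b := (a.1 = b.1 ∧ a.2 ≠ b.2) ∨ (G.Adj a.1 b.1 ∧ a.2 = b.2)
  symm := by
    constructor
    rintro a b (⟨h1, h2⟩ | ⟨h1, h2⟩)
    · exact Or.inl ⟨h1.symm, h2.symm⟩
    · exact Or.inr ⟨h1.symm, h2.symm⟩
  loopless := by
    constructor
    rintro a (⟨_, h⟩ | ⟨h, _⟩)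
    · exact h rfl
    · exact G.irrefl h

/-- The `k`-copy operation on finite graphs. -/
def FGraph.copy (G : FGraph) (k : ℕ) : FGraph where
  V := G.V × Fin k
  G := copyGraph G.G k

/-- A transduction: a composition `I ∘ Γ_𝒰 ∘ C_k` of a copy operation, a coloring
operation and a simple interpretation. -/
structure Transduction where
  k : ℕ
  kpos : 0 < k
  c : ℕ
  I : Interp c

/-- The colored graph obtained from `C_k(G)` by a choice of coloring. -/
def Transduction.copyCGraph (T : Transduction) (G : FGraph)
    (color : Fin T.c → Set (G.V × Fin T.k)) : CGraph T.c where
  V := G.V × Fin T.k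
  G := copyGraph G.G T.k
  color := color

/-- `H ∈ T(G)` (up to isomorphism). -/
def Transduction.mem (T : Transduction) (G H : FGraph) : Prop :=
  ∃ color : Fin T.c → Set (G.V × Fin T.k),
    Nonempty (H.G ≃g T.I.result (T.copyCGraph G color))

/-- The image `T(𝒟)` of a class of graphs under a transduction. -/
def TImage (T : Transduction) (D : Set FGraph) : Set FGraph :=
  {H | ∃ G ∈ D, T.mem G H}

/-- `𝒞 ⊑_FO 𝒟` : `𝒞` is a first-order transduction of `𝒟`. -/
def SqFO (C D : Set FGraph) : Prop := ∃ T : Transduction, C ⊆ TImage T D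

/-- `𝒞 ⊑°_FO 𝒟` : `𝒞` is a non-copying first-order transduction of `𝒟`. -/
def SqFOnc (C D : Set FGraph) : Prop := ∃ T : Transduction, T.k = 1 ∧ C ⊆ TImage T D

/-- `𝒞 ≡_FO 𝒟`. -/
def EquivFO (C D : Set FGraph) : Prop := SqFO C D ∧ SqFO D C

/-- `T'` subsumes `T` : `T'(G) ⊇ T(G)` for every graph `G`. -/
def Subsumes (T' T : Transduction) : Prop := ∀ G H : FGraph, T.mem G H → T'.mem G H

/-! ### Perturbations -/

/-- The subset complementation `⊕M`: complement the adjacency between distinct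
vertices that both belong to `M`. -/
def scompGraph {V : Type} (G : SimpleGraph V) (M : Set V) : SimpleGraph V where
  Adj u v := u ≠ v ∧ (G.Adj u v ↔ ¬(u ∈ M ∧ v ∈ M))
  symm := by
    constructor
    rintro u v ⟨h1, h2⟩
    refine ⟨h1.symm, ?_, ?_⟩
    · intro h hm
      exact (h2.mp (G.adj_symm h)) ⟨hm.2, hm.1⟩
    · intro h
      exact G.adj_symm (h2.mpr fun hm => h ⟨hm.2, hm.1⟩)
  loopless := ⟨fun v h => h.1 rfl⟩

/-- Applying a finite sequence of subset complementations. -/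
def perturbGraph {V : Type} : List (Set V) → SimpleGraph V → SimpleGraph V
  | [], G => G
  | M :: Ms, G => perturbGraph Ms (scompGraph G M)

/-- `H ∈ P(G)` for a perturbation `P` that is the composition of `p` subset
complementations (up to isomorphism). -/
def PerturbMem (p : ℕ) (G H : FGraph) : Prop :=
  ∃ Z : Fin p → Set G.V, Nonempty (H.G ≃g perturbGraph (List.ofFn Z) G.G)

/-- The image `P(𝒟)` of a class under a perturbation with `p` marks. -/
def PerturbImage (p : ℕ) (D : Set FGraph) : Set FGraph :=
  {H | ∃ G ∈ D, PerturbMem p G H}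

/-- `𝒞` is a perturbation of `𝒟`. -/
def IsPerturbationOfClass (C D : Set FGraph) : Prop := ∃ p, C ⊆ PerturbImage p D

/-! ### Locality -/

/-- The ball of radius `r` around a set `S` of vertices. -/
def ballSet {V : Type} (G : SimpleGraph V) (r : ℕ) (S : Set V) : Set V :=
  {v | ∃ u ∈ S, G.Reachable u v ∧ G.dist u v ≤ r}

lemma mem_ballSet_self {V : Type} (G : SimpleGraph V) (r : ℕ) {S : Set V} {v : V}
    (hv : v ∈ S) : v ∈ ballSet G r S :=
  ⟨v, hv, Reachable.refl v, by rw [SimpleGraph.dist_self]; exact Nat.zero_le r⟩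

/-- The colored subgraph induced on a set of vertices. -/
def CGraph.induce {c : ℕ} (A : CGraph c) (S : Set A.V) : CGraph c where
  V := ↥S
  G := A.G.induce S
  color := fun i => {v | (v : A.V) ∈ A.color i}

/-- A formula is `r`-local if its truth only depends on the subgraph induced by the
ball of radius `r` around its free variables. -/
def IsLocalFml {c m : ℕ} (r : ℕ) (φ : Fml c m) : Prop :=
  ∀ (A : CGraph c) (v : Fin m → A.V),
    Fml.Sat A φ v ↔
      Fml.Sat (A.induce (ballSet A.G r (Set.range v))) φ
        (fun i => ⟨v i, mem_ballSet_self A.G r (Set.mem_range_self i)⟩)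

/-- A formula is strongly `r`-local if it is `r`-local and, whenever it holds of a
tuple, the entries of the tuple are pairwise at distance at most `r`. -/
def IsStronglyLocalFml {c m : ℕ} (r : ℕ) (φ : Fml c m) : Prop :=
  IsLocalFml r φ ∧
    ∀ (A : CGraph c) (v : Fin m → A.V), Fml.Sat A φ v →
      ∀ i j : Fin m, A.G.Reachable (v i) (v j) ∧ A.G.dist (v i) (v j) ≤ r

/-- An immersive transduction: non-copying, with strongly local formulas. -/
def Transduction.Immersive (T : Transduction) : Prop :=
  T.k = 1 ∧ ∃ r : ℕ, IsStronglyLocalFml r T.I.ν ∧ IsStronglyLocalFml r T.I.η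

/-! ### Graph classes -/

/-- A set of graphs closed under isomorphism. -/
def IsoClosed (C : Set FGraph) : Prop :=
  ∀ G H : FGraph, Nonempty (G.G ≃g H.G) → G ∈ C → H ∈ C

/-- `H` is (isomorphic to) an induced subgraph of `G`. -/
def IsInducedSubgraphOf (H G : FGraph) : Prop :=
  ∃ f : H.V → G.V, Function.Injective f ∧ ∀ u v, H.G.Adj u v ↔ G.G.Adj (f u) (f v)

/-- A hereditary class: closed under induced subgraphs. -/
def HereditaryClass (C : Set FGraph) : Prop :=
  ∀ G ∈ C, ∀ H : FGraph, IsInducedSubgraphOf H G → H ∈ C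

/-- `H` is (isomorphic to) a subgraph of `G`. -/
def IsSubgraphOf (H G : FGraph) : Prop :=
  ∃ f : H.V → G.V, Function.Injective f ∧ ∀ u v, H.G.Adj u v → G.G.Adj (f u) (f v)

/-- The monotone closure of a class: all subgraphs of its members. -/
def monotoneClosure (C : Set FGraph) : Set FGraph :=
  {H | ∃ G ∈ C, IsSubgraphOf H G}

/-- `G` contains `K_{t,t}` as a subgraph. -/
def HasKtt {V : Type} (G : SimpleGraph V) (t : ℕ) : Prop :=
  ∃ a b : Fin t → V, Function.Injective a ∧ Function.Injective b ∧
    (∀ i j, a i ≠ b j) ∧ ∀ i j, G.Adj (a i) (b j)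

/-- A weakly sparse class: some `K_{t,t}` is a subgraph of no member. -/
def WeaklySparse (C : Set FGraph) : Prop := ∃ t : ℕ, ∀ G ∈ C, ¬ HasKtt G.G t

/-- Disjoint union of two graphs. -/
def sumGraph {V W : Type} (G : SimpleGraph V) (H : SimpleGraph W) : SimpleGraph (V ⊕ W) where
  Adj a b := match a, b with
    | .inl u, .inl v => G.Adj u v
    | .inr u, .inr v => H.Adj u v
    | _, _ => False
  symm := by
    constructor
    rintro (u | u) (v | v) h
    · exact G.adj_symm h
    · exact h.elim
    · exact h.elim
    · exact H.adj_symm h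
  loopless := by
    constructor
    rintro (v | v) h
    · exact G.irrefl h
    · exact H.irrefl h

/-- Disjoint union of finite graphs. -/
def FGraph.disjUnion (G H : FGraph) : FGraph where
  V := G.V ⊕ H.V
  G := sumGraph G.G H.G

/-- An addable class: closed under disjoint unions. -/
def Addable (C : Set FGraph) : Prop :=
  ∀ G ∈ C, ∀ H ∈ C, FGraph.disjUnion G H ∈ C

/-- The degree of a vertex. -/
noncomputable def degCard (G : FGraph) (v : G.V) : ℕ := Nat.card {u : G.V // G.G.Adj v u}

/-- A class with bounded maximum degree. -/
def BddDegree (C : Set FGraph) : Prop := ∃ D : ℕ, ∀ G ∈ C, ∀ v : G.V, degCard G v ≤ D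
/-! ### Further graph constructions and parameters -/

/-- Auxiliary instance. -/
instance {α : Type} [Finite α] : Finite (Option α) :=
  Finite.of_equiv _ (Equiv.optionEquivSumPUnit.{0,0} α).symm

/-- Adding an apex vertex adjacent to all vertices. -/
def apexGraph {V : Type} (G : SimpleGraph V) : SimpleGraph (Option V) where
  Adj a b := match a, b with
    | none, none => False
    | none, some _ => True
    | some _, none => True
    | some u, some v => G.Adj u v
  symm := by
    constructor
    rintro (_ | u) (_ | v) h
    · exact h.elim
    · trivial
    · trivial
    · exact G.adj_symm h
  loopless := by
    constructor
    rintro (_ | v) h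
    · exact h.elim
    · exact G.irrefl h

/-- The class `𝒞 ∨ K₁` of graphs of `𝒞` with an added apex. -/
def JoinK1 (C : Set FGraph) : Set FGraph :=
  {H | ∃ G ∈ C, Nonempty (H.G ≃g apexGraph G.G)}

/-- The ball of radius `r` around a vertex, as a finite graph. -/
def ballFGraph (G : FGraph) (r : ℕ) (v : G.V) : FGraph where
  V := ↥(ballSet G.G r {v})
  G := G.G.induce (ballSet G.G r {v})

/-- The class `𝓛_r(ℱ)` of all balls of radius `r` of graphs of `ℱ`. -/
def LocClass (r : ℕ) (F : Set FGraph) : Set FGraph :=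
  {H | ∃ G ∈ F, ∃ v : G.V, Nonempty (H.G ≃g (ballFGraph G r v).G)}

/-- Adding a pendant vertex adjacent only to `v`. -/
def pendantGraph {V : Type} (G : SimpleGraph V) (v : V) : SimpleGraph (Option V) where
  Adj a b := match a, b with
    | none, none => False
    | none, some w => w = v
    | some u, none => u = v
    | some u, some w => G.Adj u w
  symm := by
    constructor
    rintro (_ | u) (_ | w) h
    · exact h.elim
    · exact h
    · exact h
    · exact G.adj_symm h
  loopless := by
    constructor
    rintro (_ | w) h
    · exact h.elim
    · exact G.irrefl h

/-- The finite graph obtained by adding a pendant vertex at `v`. -/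
def FGraph.addPendant (G : FGraph) (v : G.V) : FGraph where
  V := Option G.V
  G := pendantGraph G.G v

/-- `G` is obtained from `H` by adding at most `h` vertices, joined arbitrarily. -/
def NearlyOf (h : ℕ) (G H : FGraph) : Prop :=
  ∃ f : H.V → G.V, Function.Injective f ∧
    (∀ u v, H.G.Adj u v ↔ G.G.Adj (f u) (f v)) ∧
    Nat.card {v : G.V // v ∉ Set.range f} ≤ h

/-- The class `𝒞` is nearly `𝒟`. -/
def Nearly (C D : Set FGraph) : Prop :=
  ∃ h : ℕ, ∀ G ∈ C, ∃ H ∈ D, NearlyOf h G H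

/-- The class `ℰ` of all edgeless graphs. -/
def EdgelessClass : Set FGraph := {G | ∀ u v : G.V, ¬ G.G.Adj u v}

/-- All members of the class have connected components of bounded size. -/
def BddComponents (D : Set FGraph) : Prop :=
  ∃ n : ℕ, ∀ G ∈ D, ∀ v : G.V, Nat.card {u : G.V // G.G.Reachable v u} ≤ n

/-- The class of all cubic (3-regular) graphs. -/
def CubicClass : Set FGraph := {G | ∀ v : G.V, degCard G v = 3}

/-- The class `𝒫` of all paths. -/
def PathClass : Set FGraph :=
  {G | ∃ n : ℕ, Nonempty (G.G ≃g SimpleGraph.pathGraph n)}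

/-- The `ℓ`-th power of a graph: two vertices are adjacent iff their distance
is between `1` and `ℓ`. -/
def powGraph {V : Type} (G : SimpleGraph V) (ℓ : ℕ) : SimpleGraph V where
  Adj u v := u ≠ v ∧ G.Reachable u v ∧ G.dist u v ≤ ℓ
  symm := by
    constructor
    rintro u v ⟨h1, h2, h3⟩
    exact ⟨h1.symm, h2.symm, by rwa [SimpleGraph.dist_comm]⟩
  loopless := ⟨fun v h => h.1 rfl⟩

/-- The bandwidth of `G` is at most `ℓ` : `G` is a subgraph of the `ℓ`-th power
of a path. -/
def BandwidthLE (G : FGraph) (ℓ : ℕ) : Prop :=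
  ∃ n : ℕ, ∃ f : G.V → Fin n, Function.Injective f ∧
    ∀ u v, G.G.Adj u v → (powGraph (SimpleGraph.pathGraph n) ℓ).Adj (f u) (f v)

/-- A class with bounded bandwidth. -/
def BddBandwidth (D : Set FGraph) : Prop := ∃ ℓ : ℕ, ∀ G ∈ D, BandwidthLE G ℓ

/-- The class of all cubic trees: trees all of whose vertices have degree 3 or 1. -/
def CubicTreeClass : Set FGraph :=
  {G | G.G.IsTree ∧ ∀ v : G.V, degCard G v = 3 ∨ degCard G v = 1}

/-- `H` contains a clique on `s` vertices. -/
def HasCliqueN {V : Type} (H : SimpleGraph V) (s : ℕ) : Prop :=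
  ∃ f : Fin s → V, Function.Injective f ∧ ∀ i j, i ≠ j → H.Adj (f i) (f j)

/-- A chordal graph: no induced cycle of length at least 4. -/
def IsChordal {V : Type} (H : SimpleGraph V) : Prop :=
  ∀ n : ℕ, 4 ≤ n → ¬ ∃ f : Fin n → V, Function.Injective f ∧
    ∀ i j, (SimpleGraph.cycleGraph n).Adj i j ↔ H.Adj (f i) (f j)

/-- `tw(G) ≤ n` : `G` is a subgraph of a chordal graph with clique number at most `n+1`. -/
def TreewidthLE (G : FGraph) (n : ℕ) : Prop :=
  ∃ H : SimpleGraph G.V, IsChordal H ∧ G.G ≤ H ∧ ¬ HasCliqueN H (n + 2)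

/-- A class with bounded treewidth. -/
def BddTreewidth (D : Set FGraph) : Prop := ∃ n : ℕ, ∀ G ∈ D, TreewidthLE G n

/-- An interval graph: the intersection graph of a family of real intervals. -/
def IsIntervalGraph {V : Type} (H : SimpleGraph V) : Prop :=
  ∃ l r : V → ℝ, (∀ v, l v ≤ r v) ∧
    ∀ u v, u ≠ v → (H.Adj u v ↔ (l u ≤ r v ∧ l v ≤ r u))

/-- `pw(G) ≤ n` : `G` is a subgraph of an interval graph with clique number at
most `n+1`. -/
def PathwidthLE (G : FGraph) (n : ℕ) : Prop :=
  ∃ H : SimpleGraph G.V, IsIntervalGraph H ∧ G.G ≤ H ∧ ¬ HasCliqueN H (n + 2)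

/-- The class `𝒫𝒲_n` of all graphs of pathwidth at most `n`. -/
def PWClass (n : ℕ) : Set FGraph := {G | PathwidthLE G n}

/-- `G` is a forest of depth at most `n` : it is acyclic and roots may be chosen,
one in each connected component, such that every vertex is at distance at most
`n - 1` from the root of its component. -/
def ForestDepthLE (n : ℕ) (G : FGraph) : Prop :=
  G.G.IsAcyclic ∧ ∃ ρ : G.V → G.V,
    (∀ v, G.G.Reachable (ρ v) v ∧ G.G.dist (ρ v) v ≤ n - 1) ∧
    ∀ u v, G.G.Reachable u v → ρ u = ρ v

/-- The class `𝒯_n` of forests of depth at most `n`. -/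
def TreeDepthClass (n : ℕ) : Set FGraph := {G | ForestDepthLE n G}

/-- A star forest: an acyclic graph with no path on four distinct vertices. -/
def IsStarForest (G : FGraph) : Prop :=
  G.G.IsAcyclic ∧ ∀ a b c d : G.V, G.G.Adj a b → G.G.Adj b c → G.G.Adj c d →
    a = c ∨ b = d ∨ a = d

/-- The class `𝒯₂` of all star forests. -/
def StarForestClass : Set FGraph := {G | IsStarForest G}

/-- `H` is a depth-`r` shallow minor of `G` : it is obtained by contracting
pairwise disjoint connected subgraphs of radius at most `r` and deleting
vertices and edges. -/
def IsShallowMinor (r : ℕ) (H G : FGraph) : Prop :=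
  ∃ φ : H.V → Set G.V,
    (∀ v, (φ v).Nonempty) ∧
    (∀ u v, u ≠ v → Disjoint (φ u) (φ v)) ∧
    (∀ v : H.V, ∃ c : ↥(φ v), ∀ u : ↥(φ v),
      (G.G.induce (φ v)).Reachable c u ∧ (G.G.induce (φ v)).dist c u ≤ r) ∧
    (∀ u v : H.V, H.G.Adj u v → ∃ a ∈ φ u, ∃ b ∈ φ v, G.G.Adj a b)

/-- The average degree of `H` is at most `d`. -/
def AvgDegLE (H : FGraph) (d : ℕ) : Prop :=
  2 * Nat.card H.G.edgeSet ≤ d * Nat.card H.V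

/-- A class of bounded expansion: for some `f : ℕ → ℕ`, every depth-`r` shallow
minor of a member has average degree at most `f r`. -/
def BoundedExpansion (C : Set FGraph) : Prop :=
  ∃ f : ℕ → ℕ, ∀ r : ℕ, ∀ G ∈ C, ∀ H : FGraph, IsShallowMinor r H G → AvgDegLE H (f r)

/-- A proper coloring `f` of `G` with `n` colors is a star coloring if no path on
four vertices receives only two colors. -/
def IsStarColoring {V : Type} (G : SimpleGraph V) (n : ℕ) (f : V → Fin n) : Prop :=
  (∀ u v, G.Adj u v → f u ≠ f v) ∧
  ∀ a b c d, G.Adj a b → G.Adj b c → G.Adj c d → a ≠ c → b ≠ d → a ≠ d →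
    ¬ (f a = f c ∧ f b = f d)

/-- A class with bounded star chromatic number. -/
def BddStarChrom (C : Set FGraph) : Prop :=
  ∃ n : ℕ, ∀ G ∈ C, ∃ f : G.V → Fin n, IsStarColoring G.G n f

/-!
`C_k(G)` is interpretable in `G` with `k` times as many colours (one colour `(a, t)` per colour
`a` and copy index `t`, a quantifier over `C_k(G)` becoming a quantifier over `G` followed by a
disjunction over the index), and `G` is interpretable in `C_k(G)` once the copy indices are given
by colours (relativise to one slice `G × {t₀}`).

Forward: evaluate the given interpretation in the slice of index `t₀`, keep all copies of the
selected vertices, and join two copies when they are copies of one vertex or when they have the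
same index and their originals are joined in the slice.

Backward: an interpretation of `C_k(H)` in `C_k(G)` embeds `H × [k]` injectively into `G × [k]`.
Any `s` vertices of `H` have `s k` copies, which lie over at least `s` vertices of `G`, so by Hall's
theorem every `h` has a copy `(f h, _)` with `f` injective. Colour these chosen copies and the
copies of index `t₀`: the chosen copy of `h` determines the `t₀`-copy of `h`, and `h ~ h'` iff
these `t₀`-copies are adjacent. Pulling this back to `G` interprets `H` on the vertex set `f(H)`
without copying.
-/

@[simp] lemma comp_vec1 {α β : Type*} (g : α → β) (a : α) : g ∘ ![a] = ![g a] := by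
  ext i; fin_cases i; rfl

@[simp] lemma comp_vec2 {α β : Type*} (g : α → β) (a b : α) : g ∘ ![a, b] = ![g a, g b] := by
  ext i; fin_cases i <;> rfl

lemma exists_vec2_pair_iff {α β : Type*} (P : (Fin 2 → α × β) → Prop) (a b : α) :
    (∃ ι : Fin 2 → β, P fun i => (![a, b] i, ι i)) ↔ ∃ i j, P ![(a, i), (b, j)] := by
  have hvec (ι : Fin 2 → β) : (fun i => (![a, b] i, ι i)) = ![(a, ι 0), (b, ι 1)] := by
    funext i; fin_cases i <;> rfl
  simp only [hvec]
  exact ⟨fun ⟨ι, h⟩ => ⟨ι 0, ι 1, h⟩, fun ⟨i, j, h⟩ => ⟨![i, j], h⟩⟩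

namespace Fml

variable {c : ℕ}

section Semantics

variable {m : ℕ} (A : CGraph c) (v : Fin m → A.V)

@[simp] lemma sat_eq (i j : Fin m) : (Fml.eq (c := c) i j).Sat A v ↔ v i = v j := Iff.rfl

@[simp] lemma sat_adj (i j : Fin m) : (Fml.adj (c := c) i j).Sat A v ↔ A.G.Adj (v i) (v j) :=
  Iff.rfl

@[simp] lemma sat_col (a : Fin c) (x : Fin m) : (Fml.col a x).Sat A v ↔ v x ∈ A.color a :=
  Iff.rfl

@[simp] lemma sat_not (φ : Fml c m) : φ.not.Sat A v ↔ ¬ φ.Sat A v := Iff.rfl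

@[simp] lemma sat_or (φ ψ : Fml c m) : (φ.or ψ).Sat A v ↔ φ.Sat A v ∨ ψ.Sat A v := Iff.rfl

@[simp] lemma sat_ex (φ : Fml c (m + 1)) : φ.ex.Sat A v ↔ ∃ w, φ.Sat A (Fin.snoc v w) :=
  Iff.rfl

end Semantics

def and {m : ℕ} (φ ψ : Fml c m) : Fml c m := (φ.not.or ψ.not).not

def falsum {m : ℕ} : Fml c m := (Fml.eq (Fin.last m) (Fin.last m)).not.ex

def iOr {m : ℕ} (l : List (Fml c m)) : Fml c m := l.foldr .or falsum

@[simp] lemma sat_and {m : ℕ} (A : CGraph c) (v : Fin m → A.V) (φ ψ : Fml c m) :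
    (φ.and ψ).Sat A v ↔ φ.Sat A v ∧ ψ.Sat A v := by
  simp [and]

@[simp] lemma sat_iOr {m : ℕ} (A : CGraph c) (v : Fin m → A.V) (l : List (Fml c m)) :
    (iOr l).Sat A v ↔ ∃ φ ∈ l, φ.Sat A v := by
  induction l with
  | nil => simp [iOr, falsum]
  | cons φ l ih => simp_all [iOr]

lemma exists_sat_iff_exists {ι : Type} [Finite ι] {m : ℕ} (φ : ι → Fml c m) :
    ∃ ψ : Fml c m, ∀ (A : CGraph c) (v : Fin m → A.V), ψ.Sat A v ↔ ∃ i, (φ i).Sat A v := by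
  have := Fintype.ofFinite ι
  exact ⟨iOr (Finset.univ.toList.map φ), fun A v => by simp⟩

def rename : {m m' : ℕ} → (Fin m → Fin m') → Fml c m → Fml c m'
  | _, _, f, .eq i j => .eq (f i) (f j)
  | _, _, f, .adj i j => .adj (f i) (f j)
  | _, _, f, .col a x => .col a (f x)
  | _, _, f, .not φ => (rename f φ).not
  | _, _, f, .or φ ψ => (rename f φ).or (rename f ψ)
  | _, _, f, .ex φ => (rename (Fin.snoc (Fin.castSucc ∘ f) (Fin.last _)) φ).ex

@[simp] lemma sat_rename {m m' : ℕ} (A : CGraph c) (f : Fin m → Fin m') (φ : Fml c m)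
    (v : Fin m' → A.V) : (rename f φ).Sat A v ↔ φ.Sat A (v ∘ f) := by
  induction φ generalizing m' with
  | ex φ ih =>
    simp only [rename, sat_ex, ih]
    refine exists_congr fun w => iff_of_eq (congrArg _ ?_)
    funext i
    refine Fin.lastCases ?_ (fun j => ?_) i <;> simp
  | _ => simp_all [rename]

def recolor {c' : ℕ} (g : Fin c → Fin c') : {m : ℕ} → Fml c m → Fml c' m
  | _, .eq i j => .eq i j
  | _, .adj i j => .adj i j
  | _, .col a x => .col (g a) x
  | _, .not φ => (recolor g φ).not
  | _, .or φ ψ => (recolor g φ).or (recolor g ψ)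
  | _, .ex φ => (recolor g φ).ex

@[simp] lemma sat_recolor {c' : ℕ} (g : Fin c → Fin c') (A : CGraph c') {m : ℕ}
    (φ : Fml c m) (v : Fin m → A.V) :
    (recolor g φ).Sat A v ↔ φ.Sat ⟨A.V, A.G, A.color ∘ g⟩ v := by
  induction φ <;> simp_all [recolor]

lemma sat_congr_equiv {A B : CGraph c} (e : A.V ≃ B.V)
    (hadj : ∀ u v, A.G.Adj u v ↔ B.G.Adj (e u) (e v))
    (hcol : ∀ a v, v ∈ A.color a ↔ e v ∈ B.color a) {m : ℕ} (φ : Fml c m)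
    (v : Fin m → A.V) : φ.Sat A v ↔ φ.Sat B (e ∘ v) := by
  induction φ with
  | ex φ ih =>
    simp only [sat_ex, ih]
    refine e.exists_congr fun w => iff_of_eq (congrArg _ ?_)
    funext i
    refine Fin.lastCases ?_ (fun j => ?_) i <;> simp
  | _ => simp_all

def symmetrize (θ : Fml c 2) : Fml c 2 := (Fml.eq 0 1).not.and (θ.or (θ.rename ![1, 0]))

@[simp] lemma sat_symmetrize (A : CGraph c) (θ : Fml c 2) (u v : A.V) :
    θ.symmetrize.Sat A ![u, v] ↔ u ≠ v ∧ (θ.Sat A ![u, v] ∨ θ.Sat A ![v, u]) := by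
  simp [symmetrize]

end Fml

abbrev FGraph.withColors {c : ℕ} (G : FGraph) (col : Fin c → Set G.V) : CGraph c :=
  ⟨G.V, G.G, col⟩

namespace Interp

variable {c : ℕ}

def ofSymmetrize (ν : Fml c 1) (θ : Fml c 2) : Interp c where
  ν := ν
  η := θ.symmetrize
  symm A u v := by
    simp only [Fml.sat_symmetrize]
    exact fun ⟨huv, h⟩ => ⟨huv.symm, h.symm⟩
  irrefl A v := by simp

def resultCongr (I : Interp c) {A B : CGraph c} (e : A.V ≃ B.V)
    (hadj : ∀ u v, A.G.Adj u v ↔ B.G.Adj (e u) (e v))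
    (hcol : ∀ a v, v ∈ A.color a ↔ e v ∈ B.color a) : I.result A ≃g I.result B where
  toEquiv := e.subtypeEquiv fun v => by
    rw [Fml.sat_congr_equiv e hadj hcol]; simp
  map_rel_iff' {u v} := by
    change I.η.Sat B ![e u, e v] ↔ I.η.Sat A ![u.1, v.1]
    rw [Fml.sat_congr_equiv e hadj hcol]; simp

lemma nonempty_iso_result_iff (I : Interp c) (A : CGraph c) (H : FGraph) :
    Nonempty (H.G ≃g I.result A) ↔ ∃ f : H.V → A.V, Function.Injective f ∧
      (∀ v, I.ν.Sat A ![v] ↔ v ∈ Set.range f) ∧ ∀ a b, H.G.Adj a b ↔ I.η.Sat A ![f a, f b] := by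
  constructor
  · rintro ⟨Φ⟩
    refine ⟨fun a => (Φ a).1, Subtype.val_injective.comp Φ.injective, fun v => ?_,
      fun a b => Φ.map_rel_iff.symm⟩
    refine ⟨fun hv => ⟨Φ.symm ⟨v, hv⟩, by simp⟩, ?_⟩
    rintro ⟨a, rfl⟩
    exact (Φ a).2
  · rintro ⟨f, hf, hν, hη⟩
    have hbij : Function.Bijective fun a => (⟨f a, (hν _).2 ⟨a, rfl⟩⟩ : {v // I.ν.Sat A ![v]}) :=
      ⟨fun a b hab => hf (congrArg Subtype.val hab), fun ⟨v, hv⟩ => by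
        obtain ⟨a, rfl⟩ := (hν v).1 hv
        exact ⟨a, rfl⟩⟩
    exact ⟨⟨Equiv.ofBijective _ hbij, fun {a b} => (hη a b).symm⟩⟩

/-- `H ∈ I(Γ(G))` up to isomorphism. -/
def Mem (I : Interp c) (G H : FGraph) : Prop :=
  ∃ col : Fin c → Set G.V, Nonempty (H.G ≃g I.result (G.withColors col))

lemma ofSymmetrize_mem {ν : Fml c 1} {θ : Fml c 2} {G H : FGraph} (col : Fin c → Set G.V)
    (f : H.V → G.V) (hf : Function.Injective f)
    (hν : ∀ v, ν.Sat (G.withColors col) ![v] ↔ v ∈ Set.range f)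
    (hθ : ∀ a b, H.G.Adj a b ↔ θ.Sat (G.withColors col) ![f a, f b]) :
    (ofSymmetrize ν θ).Mem G H := by
  refine ⟨col, (nonempty_iso_result_iff _ _ _).2 ⟨f, hf, hν, fun a b => ?_⟩⟩
  rw [ofSymmetrize, Fml.sat_symmetrize, ← hθ, ← hθ, hf.ne_iff]
  exact ⟨fun h => ⟨H.G.ne_of_adj h, .inl h⟩, fun ⟨_, h⟩ => h.elim id H.G.adj_symm⟩

end Interp

lemma Transduction.mem_iff_interp_mem {c : ℕ} (I : Interp c) (h1 : 0 < 1) (G H : FGraph) :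
    (⟨1, h1, c, I⟩ : Transduction).mem G H ↔ I.Mem G H := by
  let e : G.V × Fin 1 ≃ G.V :=
    ⟨Prod.fst, fun v => (v, 0), fun p => Prod.ext rfl (Subsingleton.elim _ _), fun _ => rfl⟩
  have hadj (x y : G.V × Fin 1) : (copyGraph G.G 1).Adj x y ↔ G.G.Adj (e x) (e y) := by
    simp [copyGraph, e, Subsingleton.elim x.2 y.2]
  constructor
  · rintro ⟨color, ⟨Φ⟩⟩
    refine ⟨fun a => {v | (v, 0) ∈ color a}, ⟨Φ.trans (I.resultCongr e hadj fun a v => ?_)⟩⟩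
    change v ∈ color a ↔ (v.1, 0) ∈ color a
    rw [Subsingleton.elim (0 : Fin 1) v.2]
    rfl
  · rintro ⟨col, ⟨Φ⟩⟩
    exact ⟨fun a => Prod.fst ⁻¹' col a, ⟨Φ.trans (I.resultCongr e hadj fun _ _ => Iff.rfl).symm⟩⟩

lemma sqFOnc_iff (C D : Set FGraph) :
    SqFOnc C D ↔ ∃ (c : ℕ) (I : Interp c), ∀ H ∈ C, ∃ G ∈ D, I.Mem G H := by
  constructor
  · rintro ⟨⟨k, hk, c, I⟩, rfl, hCD⟩
    exact ⟨c, I, fun H hH => by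
      obtain ⟨G, hG, hGH⟩ := hCD hH
      exact ⟨G, hG, (Transduction.mem_iff_interp_mem I hk G H).1 hGH⟩⟩
  · rintro ⟨c, I, hCD⟩
    refine ⟨⟨1, one_pos, c, I⟩, rfl, fun H hH => ?_⟩
    obtain ⟨G, hG, hGH⟩ := hCD H hH
    exact ⟨G, hG, (Transduction.mem_iff_interp_mem I one_pos G H).2 hGH⟩

/-- `(G.copy k).withColors col`, with a vertex type that is reducibly a product. -/
abbrev FGraph.copyWithColors {c : ℕ} (G : FGraph) (k : ℕ) (col : Fin c → Set (G.V × Fin k)) :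
    CGraph c :=
  ⟨G.V × Fin k, copyGraph G.G k, col⟩

namespace Fml

variable {c k : ℕ}

/-- Colour `(a, t)` of `G` marks the vertices whose `t`-th copy has colour `a` in `C_k(G)`. -/
def baseColors {V : Type} (col : Fin c → Set (V × Fin k)) : Fin (c * k) → Set V :=
  fun b => {v | (v, (finProdFinEquiv.symm b).2) ∈ col (finProdFinEquiv.symm b).1}

def toBase : {m : ℕ} → Fml c m → (Fin m → Fin k) → Fml (c * k) m
  | _, .eq i j, ι => if ι i = ι j then .eq i j else falsum
  | _, .adj i j, ι => if ι i = ι j then .adj i j else .eq i j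
  | _, .col a x, ι => .col (finProdFinEquiv (a, ι x)) x
  | _, .not φ, ι => (toBase φ ι).not
  | _, .or φ ψ, ι => (toBase φ ι).or (toBase ψ ι)
  | _, .ex φ, ι => (iOr (List.ofFn fun t => toBase φ (Fin.snoc ι t))).ex

lemma sat_toBase (G : FGraph) (col : Fin c → Set (G.V × Fin k)) {m : ℕ} (φ : Fml c m)
    (ι : Fin m → Fin k) (w : Fin m → G.V) :
    (toBase φ ι).Sat (G.withColors (baseColors col)) w ↔
      φ.Sat (G.copyWithColors k col) fun i => (w i, ι i) := by
  induction φ with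
  | eq i j =>
    by_cases h : ι i = ι j <;> simp [toBase, h, falsum, Prod.ext_iff]
  | adj i j =>
    by_cases h : ι i = ι j <;> simp [toBase, h, copyGraph]
  | col a x => simp [toBase, baseColors]
  | not φ ih => simp [toBase, ih]
  | or φ ψ ih₁ ih₂ => simp [toBase, ih₁, ih₂]
  | ex φ ih =>
    have hsnoc (u : G.V) (t : Fin k) : (fun i => ((Fin.snoc w u : _ → G.V) i,
        (Fin.snoc ι t : _ → Fin k) i)) = Fin.snoc (fun i => (w i, ι i)) (u, t) := by
      funext i; refine Fin.lastCases ?_ (fun j => ?_) i <;> simp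
    simp only [toBase, sat_ex, sat_iOr, List.mem_ofFn, exists_exists_eq_and, ih, hsnoc]
    exact ⟨fun ⟨u, t, h⟩ => ⟨(u, t), h⟩, fun ⟨⟨u, t⟩, h⟩ => ⟨u, t, h⟩⟩

lemma exists_base_formula {m : ℕ} (φ : Fml c m) :
    ∃ ψ : Fml (c * k) m, ∀ (G : FGraph) (col : Fin c → Set (G.V × Fin k)) (w : Fin m → G.V),
      ψ.Sat (G.withColors (baseColors col)) w ↔
        ∃ ι : Fin m → Fin k, φ.Sat (G.copyWithColors k col) fun i => (w i, ι i) := by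
  obtain ⟨ψ, hψ⟩ := exists_sat_iff_exists (toBase (k := k) φ)
  exact ⟨ψ, fun G col w => by simp only [hψ, sat_toBase]⟩

def copyColors {V : Type} (col : Fin c → Set V) : Fin (c + k) → Set (V × Fin k) :=
  Fin.append (fun a => Prod.fst ⁻¹' col a) fun t => {p | p.2 = t}

def toSlice (t₀ : Fin k) : {m : ℕ} → Fml c m → Fml (c + k) m
  | _, .eq i j => .eq i j
  | _, .adj i j => .adj i j
  | _, .col a x => .col (Fin.castAdd k a) x
  | _, .not φ => (toSlice t₀ φ).not
  | _, .or φ ψ => (toSlice t₀ φ).or (toSlice t₀ ψ)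
  | _, .ex φ => ((Fml.col (Fin.natAdd c t₀) (Fin.last _)).and (toSlice t₀ φ)).ex

lemma sat_toSlice (G : FGraph) (col : Fin c → Set G.V) (t₀ : Fin k) {m : ℕ} (φ : Fml c m)
    (w : Fin m → G.V) :
    (toSlice t₀ φ).Sat (G.copyWithColors k (copyColors col)) (fun i => (w i, t₀)) ↔
      φ.Sat (G.withColors col) w := by
  induction φ with
  | eq i j => simp [toSlice, Prod.ext_iff]
  | adj i j => simp [toSlice, copyGraph]
  | col a x => simp [toSlice, copyColors]
  | not φ ih => simp [toSlice, ih]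
  | or φ ψ ih₁ ih₂ => simp [toSlice, ih₁, ih₂]
  | ex φ ih =>
    have hsnoc (u : G.V) : Fin.snoc (fun i => (w i, t₀)) (u, t₀) =
        fun i => ((Fin.snoc w u : _ → G.V) i, t₀) := by
      funext i; refine Fin.lastCases ?_ (fun j => ?_) i <;> simp
    simp only [toSlice, sat_ex, sat_and, sat_col, Fin.snoc_last]
    constructor
    · rintro ⟨⟨u, t⟩, ht, h⟩
      obtain rfl : t = t₀ := by simpa [copyColors] using ht
      exact ⟨u, (ih _).1 (hsnoc u ▸ h)⟩
    · rintro ⟨u, h⟩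
      exact ⟨(u, t₀), by simp [copyColors], hsnoc u ▸ (ih _).2 h⟩


def hasIdx (t : Fin k) {m : ℕ} (x : Fin m) : Fml (c + k) m := .col (Fin.natAdd c t) x

def sameIdx {m : ℕ} (x y : Fin m) : Fml (c + k) m :=
  iOr (List.ofFn fun t => (hasIdx t x).and (hasIdx t y))

/-- Distinct copies of one vertex are exactly the adjacent pairs with different indices. -/
def sameOrig {m : ℕ} (x y : Fin m) : Fml (c + k) m :=
  (Fml.eq x y).or ((Fml.adj x y).and (sameIdx x y).not)

section CopySemantics

variable (G : FGraph) (col : Fin c → Set G.V) {m : ℕ} (v : Fin m → G.V × Fin k)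

@[simp] lemma sat_hasIdx (t : Fin k) (x : Fin m) :
    (hasIdx t x).Sat (G.copyWithColors k (copyColors col)) v ↔ (v x).2 = t := by
  simp [hasIdx, copyColors]

@[simp] lemma sat_sameIdx (x y : Fin m) :
    (sameIdx x y).Sat (G.copyWithColors k (copyColors col)) v ↔ (v x).2 = (v y).2 := by
  simp [sameIdx, eq_comm]

@[simp] lemma sat_sameOrig (x y : Fin m) :
    (sameOrig x y).Sat (G.copyWithColors k (copyColors col)) v ↔ (v x).1 = (v y).1 := by
  by_cases h : (v x).2 = (v y).2 <;> simp [sameOrig, copyGraph, h, Prod.ext_iff]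

end CopySemantics

def copyν (t₀ : Fin k) (ν : Fml c 1) : Fml (c + k) 1 :=
  ((hasIdx t₀ 1).and ((sameOrig 0 1).and ((toSlice t₀ ν).rename ![1]))).ex

def copyθ (t₀ : Fin k) (η : Fml c 2) : Fml (c + k) 2 :=
  ((Fml.adj 0 1).and (sameIdx 0 1).not).or ((sameIdx 0 1).and
    ((hasIdx t₀ 2).and ((hasIdx t₀ 3).and ((sameOrig 0 2).and ((sameOrig 1 3).and
      ((toSlice t₀ η).rename ![2, 3]))))).ex.ex)

variable (G : FGraph) (col : Fin c → Set G.V) (t₀ : Fin k)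

lemma sat_copyν (ν : Fml c 1) (p : G.V × Fin k) :
    (copyν t₀ ν).Sat (G.copyWithColors k (copyColors col)) ![p] ↔
      ν.Sat (G.withColors col) ![p.1] := by
  have hv : (fun _ => (p.1, t₀)) = ![(p.1, t₀)] := by funext i; fin_cases i; rfl
  rw [← sat_toSlice G col t₀ ν]
  simp [copyν, hv]

lemma sat_copyθ (η : Fml c 2) (p q : G.V × Fin k) :
    (copyθ t₀ η).Sat (G.copyWithColors k (copyColors col)) ![p, q] ↔
      (p.1 = q.1 ∧ p.2 ≠ q.2) ∨ (p.2 = q.2 ∧ η.Sat (G.withColors col) ![p.1, q.1]) := by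
  have hv : (fun i => (![p.1, q.1] i, t₀)) = ![(p.1, t₀), (q.1, t₀)] := by
    funext i; fin_cases i <;> rfl
  rw [← sat_toSlice G col t₀ η]
  by_cases h : p.2 = q.2 <;> simp [copyθ, copyGraph, hv, h]

end Fml

namespace Interp

variable {c k : ℕ}

def copy (I : Interp c) (t₀ : Fin k) : Interp (c + k) :=
  ofSymmetrize (Fml.copyν t₀ I.ν) (Fml.copyθ t₀ I.η)

lemma Mem.copy {I : Interp c} {G H : FGraph} (h : I.Mem G H) (t₀ : Fin k) :
    (I.copy t₀).Mem (G.copy k) (H.copy k) := by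
  obtain ⟨col, hiso⟩ := h
  obtain ⟨f, hf, hν, hη⟩ := (nonempty_iso_result_iff I _ H).1 hiso
  refine ofSymmetrize_mem (G := G.copy k) (H := H.copy k) (Fml.copyColors col) (Prod.map f id)
    (hf.prodMap Function.injective_id) (fun p => ?_) (fun ⟨a, i⟩ ⟨b, j⟩ => ?_)
  · refine (Fml.sat_copyν G col t₀ I.ν p).trans ((hν p.1).trans ?_)
    exact ⟨fun ⟨a, ha⟩ => ⟨(a, p.2), Prod.ext ha rfl⟩, fun ⟨a, ha⟩ => ⟨a.1, congrArg Prod.fst ha⟩⟩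
  · refine Iff.trans ?_ (Fml.sat_copyθ G col t₀ I.η _ _).symm
    change (a = b ∧ i ≠ j) ∨ (H.G.Adj a b ∧ i = j) ↔
      (f a = f b ∧ i ≠ j) ∨ (i = j ∧ I.η.Sat (G.withColors col) ![f a, f b])
    rw [hf.eq_iff, ← hη, and_comm (a := i = j)]

end Interp

lemma Function.Injective.exists_injective_fst_transversal {α β ι : Type*} [Finite α] [Finite β]
    [Fintype ι] [Nonempty ι] {e : α × ι → β × ι} (he : Function.Injective e) :
    ∃ f : α → β, Function.Injective f ∧ ∀ a, ∃ i, (e (a, i)).1 = f a := by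
  classical
  have := Fintype.ofFinite α
  have := Fintype.ofFinite β
  let t : α → Finset β := fun a => Finset.univ.image fun i => (e (a, i)).1
  have hall (s : Finset α) : s.card ≤ (s.biUnion t).card := by
    have hsub : (s ×ˢ Finset.univ).image e ⊆ s.biUnion t ×ˢ (Finset.univ : Finset ι) := by
      intro x hx
      obtain ⟨⟨a, i⟩, hai, rfl⟩ := Finset.mem_image.1 hx
      simp only [Finset.mem_product, Finset.mem_univ, and_true] at hai
      simpa [t] using ⟨a, hai, i, rfl⟩
    have hcard := Finset.card_le_card hsub
    rw [Finset.card_image_of_injective _ he, Finset.card_product, Finset.card_product] at hcard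
    exact Nat.le_of_mul_le_mul_right hcard Finset.univ_nonempty.card_pos
  obtain ⟨f, hf, hft⟩ := (Finset.all_card_le_biUnion_card_iff_exists_injective t).1 hall
  exact ⟨f, hf, fun a => by simpa [t] using hft a⟩

namespace Fml

variable {c k : ℕ}

abbrev markedCopy (G : FGraph) (col : Fin c → Set (G.V × Fin k)) (Q R : Set (G.V × Fin k)) :
    CGraph (c + 2) :=
  G.copyWithColors k (Fin.append col ![Q, R])

def inQ {m : ℕ} (x : Fin m) : Fml (c + 2) m := .col (Fin.natAdd c 0) x

def inR {m : ℕ} (x : Fin m) : Fml (c + 2) m := .col (Fin.natAdd c 1) x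

def liftη (η : Fml c 2) {m : ℕ} (x y : Fin m) : Fml (c + 2) m :=
  (η.recolor (Fin.castAdd 2)).rename ![x, y]

def anchor (η : Fml c 2) {m : ℕ} (x y : Fin m) : Fml (c + 2) m :=
  (inQ y).and ((Fml.eq x y).or ((inQ x).not.and (liftη η x y)))

def descendθ (η : Fml c 2) : Fml (c + 2) 2 :=
  (inR 0).and ((inR 1).and ((anchor η 0 2).and ((anchor η 1 3).and (liftη η 2 3))).ex.ex)

section Descend

variable {G : FGraph} {col : Fin c → Set (G.V × Fin k)} {Q R : Set (G.V × Fin k)} {m : ℕ}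
  (v : Fin m → G.V × Fin k)

@[simp] lemma sat_inQ (x : Fin m) : (inQ x).Sat (markedCopy G col Q R) v ↔ v x ∈ Q := by
  simp [inQ]

@[simp] lemma sat_inR (x : Fin m) : (inR x).Sat (markedCopy G col Q R) v ↔ v x ∈ R := by
  simp [inR]

@[simp] lemma sat_liftη (η : Fml c 2) (x y : Fin m) :
    (liftη η x y).Sat (markedCopy G col Q R) v ↔ η.Sat (G.copyWithColors k col) ![v x, v y] := by
  have hcol : Fin.append col ![Q, R] ∘ Fin.castAdd 2 = col := funext fun a => by simp
  simp only [liftη, sat_rename, sat_recolor, comp_vec2]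
  rw [hcol]

variable {H : FGraph} {η : Fml c 2} {emb : H.V × Fin k → G.V × Fin k}
  (he : Function.Injective emb)
  (hη : ∀ a b, (copyGraph H.G k).Adj a b ↔ η.Sat (G.copyWithColors k col) ![emb a, emb b])
  (t₀ : Fin k)
include he hη

/-- Inside `Q`, the `t₀`-th copy of `h` is the only neighbour of the other copies of `h`. -/
lemma sat_anchor (x y : Fin m) {h : H.V} {t : Fin k} (hx : v x = emb (h, t)) :
    (anchor η x y).Sat (markedCopy G col (Set.range fun h => emb (h, t₀)) R) v ↔
      v y = emb (h, t₀) := by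
  simp only [anchor, sat_and, sat_inQ, sat_or, sat_eq, sat_not, sat_liftη, hx, Set.mem_range]
  constructor
  · rintro ⟨⟨h', hy⟩, hxy | ⟨hxQ, hadj⟩⟩
    · rw [← hy] at hxy ⊢
      obtain rfl : h = h' := (Prod.mk.inj (he hxy)).1
      rfl
    · rw [← hy, ← hη] at hadj
      rw [← hy]
      rcases hadj with ⟨hh', -⟩ | ⟨-, rfl⟩
      · obtain rfl : h = h' := hh'
        rfl
      · exact absurd ⟨h, rfl⟩ hxQ
  · intro hy
    refine ⟨⟨h, hy.symm⟩, ?_⟩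
    by_cases ht : t = t₀
    · exact .inl (by rw [hy, ht])
    · refine .inr ⟨fun ⟨h', he'⟩ => ht (Prod.ext_iff.1 (he he')).2.symm, ?_⟩
      rw [hy, ← hη]
      exact .inl ⟨rfl, ht⟩

lemma sat_descendθ (s : H.V → Fin k) (x y : G.V × Fin k) :
    (descendθ η).Sat
        (markedCopy G col (Set.range fun h => emb (h, t₀)) (Set.range fun h => emb (h, s h)))
        ![x, y] ↔
      ∃ a b, emb (a, s a) = x ∧ emb (b, s b) = y ∧ H.G.Adj a b := by
  simp only [descendθ, sat_and, sat_inR, sat_ex, sat_liftη, Matrix.Fin.snoc_vecCons,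
    Matrix.Fin.snoc_vecEmpty, Set.mem_range]
  constructor
  · rintro ⟨⟨a, rfl⟩, ⟨b, rfl⟩, w, w', hw, hw', hadj⟩
    rw [sat_anchor _ he hη t₀ _ _ (h := a) (t := s a) rfl] at hw
    rw [sat_anchor _ he hη t₀ _ _ (h := b) (t := s b) rfl] at hw'
    simp only [Matrix.cons_val] at hw hw' hadj
    rw [hw, hw', ← hη] at hadj
    exact ⟨a, b, rfl, rfl, hadj.elim (fun h => absurd rfl h.2) And.left⟩
  · rintro ⟨a, b, rfl, rfl, hab⟩
    refine ⟨⟨a, rfl⟩, ⟨b, rfl⟩, emb (a, t₀), emb (b, t₀), ?_, ?_, ?_⟩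
    · rw [sat_anchor _ he hη t₀ _ _ (h := a) (t := s a) rfl]; rfl
    · rw [sat_anchor _ he hη t₀ _ _ (h := b) (t := s b) rfl]; rfl
    · simp only [Matrix.cons_val]
      exact (hη _ _).1 (.inr ⟨hab, rfl⟩)

end Descend

end Fml

namespace Interp

variable {c k : ℕ}

lemma exists_mem_of_mem_copy (I : Interp c) (t₀ : Fin k) :
    ∃ I' : Interp ((c + 2) * k), ∀ G H : FGraph, I.Mem (G.copy k) (H.copy k) → I'.Mem G H := by
  obtain ⟨ν', hν'⟩ := Fml.exists_base_formula (k := k) (Fml.inR (c := c) (0 : Fin 1))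
  obtain ⟨θ', hθ'⟩ := Fml.exists_base_formula (k := k) (Fml.descendθ I.η)
  refine ⟨ofSymmetrize ν' θ', fun G H hGH => ?_⟩
  obtain ⟨col, hiso⟩ : ∃ col : Fin c → Set (G.V × Fin k), _ := hGH
  obtain ⟨emb, he, -, hη⟩ : ∃ emb : H.V × Fin k → G.V × Fin k, Function.Injective emb ∧ _ ∧
      ∀ a b, (copyGraph H.G k).Adj a b ↔ I.η.Sat (G.copyWithColors k col) ![emb a, emb b] :=
    (nonempty_iso_result_iff I _ _).1 hiso
  have : Nonempty (Fin k) := ⟨t₀⟩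
  obtain ⟨f, hf, hfs⟩ := he.exists_injective_fst_transversal
  choose s hs using hfs
  have hrep (a : H.V) (g : G.V) (i : Fin k) :
      emb (a, s a) = (g, i) ↔ f a = g ∧ (emb (a, s a)).2 = i := by
    rw [← hs, Prod.ext_iff]
  refine ofSymmetrize_mem (Fml.baseColors (Fin.append col
    ![Set.range fun a => emb (a, t₀), Set.range fun a => emb (a, s a)])) f hf
    (fun g => ?_) (fun a b => ?_)
  · rw [hν']
    simp only [Fml.sat_inR, Set.mem_range]
    constructor
    · rintro ⟨ι, a, ha⟩
      exact ⟨a, ((hrep _ _ _).1 ha).1⟩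
    · rintro ⟨a, rfl⟩
      exact ⟨fun _ => (emb (a, s a)).2, a, (hrep _ _ _).2 ⟨rfl, rfl⟩⟩
  · rw [hθ', exists_vec2_pair_iff]
    simp only [Fml.sat_descendθ he hη, hrep]
    constructor
    · intro hab
      exact ⟨_, _, a, b, ⟨rfl, rfl⟩, ⟨rfl, rfl⟩, hab⟩
    · rintro ⟨i, j, a', b', ⟨ha, -⟩, ⟨hb, -⟩, hab⟩
      rwa [← hf ha, ← hf hb]

end Interp

theorem copy_cancellation_general (C D : Set FGraph) (k : ℕ) (hk : 0 < k) :
    SqFOnc C D ↔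
      SqFOnc ((fun G => FGraph.copy G k) '' C) ((fun G => FGraph.copy G k) '' D) := by
  let t₀ : Fin k := ⟨0, hk⟩
  simp only [sqFOnc_iff, Set.forall_mem_image, Set.exists_mem_image]
  constructor
  · rintro ⟨c, I, hI⟩
    refine ⟨c + k, I.copy t₀, fun H hH => ?_⟩
    obtain ⟨G, hG, hGH⟩ := hI H hH
    exact ⟨G, hG, hGH.copy t₀⟩
  · rintro ⟨c, I, hI⟩
    obtain ⟨I', hI'⟩ := I.exists_mem_of_mem_copy t₀
    refine ⟨_, I', fun H hH => ?_⟩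
    obtain ⟨G, hG, hGH⟩ := hI hH
    exact ⟨G, hG, hI' G H hGH⟩

theorem copy_cancellation (C D : Set FGraph) (hC : IsoClosed C) (hD : IsoClosed D)
    (k : ℕ) (hk : 0 < k) :
    SqFOnc C D ↔
      SqFOnc ((fun G => FGraph.copy G k) '' C) ((fun G => FGraph.copy G k) '' D) :=
  copy_cancellation_general C D k hk
end

section
/- Let 𝒞 and 𝒟 be classes of graphs. If 𝒞 is weakly sparse, 𝒟 is weakly sparse and hereditary, and 𝒞 ⊆ P(𝒟) for some perturbation P, then 𝒞 is nearly 𝒟. -/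
open SimpleGraph

/-!
The mark type of a vertex is the set of marks containing it. The perturbation flips the edge `uv`
exactly when an odd number of marks contain both ends, so whether a pair is flipped depends only
on the two mark types. If two mark types are each shared by at least `2^(2t)·t + 2t` vertices and
the pair of types is flipped, bipartite Ramsey between the two classes gives a `K_{t,t}` either in
the graph from `𝒟` or in its perturbation from `𝒞`. Hence the perturbation does not change the
subgraph induced by the vertices of large types, and the other vertices, fewer than
`2^(2t)·t + 2t` for each of the `2^p` mark types, are the added ones.
-/

open Finset

section Ktt

variable {V W : Type} {G : SimpleGraph V} {s t : ℕ}

lemma HasKtt.mono (hst : s ≤ t) : HasKtt G t → HasKtt G s := by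
  rintro ⟨a, b, ha, hb, hne, hadj⟩
  exact ⟨a ∘ Fin.castLE hst, b ∘ Fin.castLE hst, ha.comp (Fin.castLE_injective hst),
    hb.comp (Fin.castLE_injective hst), fun _ _ => hne _ _, fun _ _ => hadj _ _⟩

lemma HasKtt.map {H : SimpleGraph W} (f : G →g H) (hf : Function.Injective f) :
    HasKtt G t → HasKtt H t := by
  rintro ⟨a, b, ha, hb, hne, hadj⟩
  exact ⟨f ∘ a, f ∘ b, hf.comp ha, hf.comp hb, fun i j h => hne i j (hf h),
    fun i j => f.map_adj (hadj i j)⟩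

lemma hasKtt_of_forall_adj {A B : Finset V} (hAB : Disjoint A B) (hA : t ≤ #A) (hB : t ≤ #B)
    (hadj : ∀ a ∈ A, ∀ b ∈ B, G.Adj a b) : HasKtt G t := by
  obtain ⟨a⟩ := Function.Embedding.nonempty_of_card_le (α := Fin t) (β := A) (by simpa)
  obtain ⟨b⟩ := Function.Embedding.nonempty_of_card_le (α := Fin t) (β := B) (by simpa)
  exact ⟨(↑) ∘ a, (↑) ∘ b, Subtype.val_injective.comp a.injective,
    Subtype.val_injective.comp b.injective,
    fun i j => disjoint_iff_ne.1 hAB _ (a i).2 _ (b j).2,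
    fun i j => hadj _ (a i).2 _ (b j).2⟩

end Ktt

/-- Bipartite Ramsey: sort the vertices of `Y` by their neighbourhood in a `2t`-subset of `X`;
some neighbourhood is shared by `t` of them, and it or its complement has `t` elements. -/
lemma exists_homogeneous_pair {V : Type} (r : V → V → Prop) {t : ℕ} {X Y : Finset V}
    (hX : 2 * t ≤ #X) (hY : 2 ^ (2 * t) * t ≤ #Y) :
    ∃ A ⊆ X, ∃ B ⊆ Y, t ≤ #A ∧ t ≤ #B ∧
      ((∀ a ∈ A, ∀ b ∈ B, r a b) ∨ ∀ a ∈ A, ∀ b ∈ B, ¬ r a b) := by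
  classical
  obtain ⟨X', hX'X, hX'⟩ := exists_subset_card_eq hX
  obtain ⟨S, hS, hB⟩ := exists_le_card_fiber_of_mul_le_card_of_maps_to
    (s := Y) (f := fun y => X'.filter (r · y)) (n := t) (fun _ _ => mem_powerset.2 (filter_subset _ _))
    (powerset_nonempty X') (by rwa [card_powerset, hX'])
  set B := Y.filter fun y => X'.filter (r · y) = S
  have hSX' : S ⊆ X' := mem_powerset.1 hS
  have hrB : ∀ x ∈ X', ∀ y ∈ B, r x y ↔ x ∈ S := by
    intro x hx y hy
    rw [← (mem_filter.1 hy).2, mem_filter]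
    exact (and_iff_right hx).symm
  have hsplit : #(X' \ S) + #S = 2 * t := by rw [card_sdiff_add_card_eq_card hSX', hX']
  by_cases hSt : t ≤ #S
  · exact ⟨S, hSX'.trans hX'X, B, filter_subset _ _, hSt, hB,
      Or.inl fun a ha b hb => (hrB a (hSX' ha) b hb).2 ha⟩
  · exact ⟨X' \ S, sdiff_subset.trans hX'X, B, filter_subset _ _, by omega, hB,
      Or.inr fun a ha b hb h => (mem_sdiff.1 ha).2 ((hrB a (mem_sdiff.1 ha).1 b hb).1 h)⟩

lemma hasKtt_or_hasKtt_of_flip {V : Type} {G H : SimpleGraph V} {t : ℕ} {X Y : Finset V}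
    (hXY : X = Y ∨ Disjoint X Y) (hX : 2 ^ (2 * t) * t + 2 * t ≤ #X)
    (hY : 2 ^ (2 * t) * t + 2 * t ≤ #Y)
    (hflip : ∀ x ∈ X, ∀ y ∈ Y, x ≠ y → (G.Adj x y ↔ ¬ H.Adj x y)) :
    HasKtt G t ∨ HasKtt H t := by
  classical
  obtain ⟨X', hX'X, Y', hY'Y, hdisj, hX', hY'⟩ : ∃ X' ⊆ X, ∃ Y' ⊆ Y,
      Disjoint X' Y' ∧ 2 * t ≤ #X' ∧ 2 ^ (2 * t) * t ≤ #Y' := by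
    rcases hXY with rfl | hXY
    · obtain ⟨X', hX'X, hX'⟩ := exists_subset_card_eq (show 2 * t ≤ #X by omega)
      exact ⟨X', hX'X, X \ X', sdiff_subset, disjoint_sdiff, hX'.ge,
        by rw [card_sdiff_of_subset hX'X]; omega⟩
    · exact ⟨X, subset_rfl, Y, subset_rfl, hXY, by omega, by omega⟩
  obtain ⟨A, hAX', B, hBY', hA, hB, hall | hnone⟩ := exists_homogeneous_pair G.Adj hX' hY'
  all_goals have hAB : Disjoint A B := hdisj.mono hAX' hBY'
  · exact .inl (hasKtt_of_forall_adj hAB hA hB hall)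
  · refine .inr (hasKtt_of_forall_adj hAB hA hB fun a ha b hb => ?_)
    by_contra h
    exact hnone a ha b hb <| (hflip a (hX'X (hAX' ha)) b (hY'Y (hBY' hb))
      (disjoint_iff_ne.1 hAB a ha b hb)).2 h

lemma card_filter_card_fiber_lt_le {V β : Type} [Fintype V] [Fintype β] [DecidableEq β]
    (κ : V → β) (N : ℕ) : #{v | #{w | κ w = κ v} < N} ≤ Fintype.card β * N := by
  rw [card_eq_sum_card_fiberwise (f := κ) (t := univ) fun _ _ => mem_univ _, ← smul_eq_mul,
    ← card_univ]
  refine sum_le_card_nsmul _ _ _ fun b _ => ?_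
  rcases (filter (κ · = b) (filter (fun v => #{w | κ w = κ v} < N) univ)).eq_empty_or_nonempty
    with h | ⟨v, hv⟩
  · simp [h]
  · simp only [mem_filter, mem_univ, true_and] at hv
    refine (card_le_card fun w hw => ?_).trans (hv.2 ▸ hv.1).le
    simp only [mem_filter, mem_univ, true_and] at hw ⊢
    exact hw.2

open scoped Classical in
theorem perturbGraph_adj {V : Type} (Ms : List (Set V)) (G : SimpleGraph V) (u v : V) :
    (perturbGraph Ms G).Adj u v ↔
      u ≠ v ∧ (G.Adj u v ↔ Even (Ms.countP fun M => u ∈ M ∧ v ∈ M)) := by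
  induction Ms generalizing G with
  | nil => exact ⟨fun h => ⟨h.ne, iff_of_true h (by simp)⟩, fun h => h.2.2 (by simp)⟩
  | cons M Ms ih =>
    rw [perturbGraph, ih, List.countP_cons]
    change u ≠ v ∧ ((u ≠ v ∧ (G.Adj u v ↔ ¬(u ∈ M ∧ v ∈ M))) ↔ _) ↔ _
    by_cases h : u ∈ M ∧ v ∈ M
    · rw [if_pos (decide_eq_true h), Nat.even_add_one]
      simp only [h, and_self, not_true_eq_false, iff_false]
      tauto
    · rw [if_neg (by simpa using h), add_zero]
      simp only [h, not_false_eq_true, iff_true]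
      tauto

def markType {V : Type} {p : ℕ} (Z : Fin p → Set V) (v : V) : Set (Fin p) := {i | v ∈ Z i}

open scoped Classical in
lemma countP_ofFn_congr_of_markType_eq {V : Type} {p : ℕ} {Z : Fin p → Set V} {x y u v : V}
    (hx : markType Z x = markType Z u) (hy : markType Z y = markType Z v) :
    (List.ofFn Z).countP (fun M => x ∈ M ∧ y ∈ M) =
      (List.ofFn Z).countP (fun M => u ∈ M ∧ v ∈ M) := by
  refine List.countP_congr fun M hM => ?_
  obtain ⟨i, rfl⟩ := List.mem_ofFn.1 hM
  simp only [decide_eq_true_eq]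
  exact and_congr (Set.ext_iff.1 hx i) (Set.ext_iff.1 hy i)

open scoped Classical in
lemma even_countP_of_large_markTypes {V : Type} [Fintype V] {G : SimpleGraph V} {p t : ℕ}
    {Z : Fin p → Set V} (hG : ¬ HasKtt G t) (hG' : ¬ HasKtt (perturbGraph (List.ofFn Z) G) t)
    {u v : V} (hu : 2 ^ (2 * t) * t + 2 * t ≤ #{w | markType Z w = markType Z u})
    (hv : 2 ^ (2 * t) * t + 2 * t ≤ #{w | markType Z w = markType Z v}) :
    Even ((List.ofFn Z).countP fun M => u ∈ M ∧ v ∈ M) := by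
  by_contra hodd
  refine (hasKtt_or_hasKtt_of_flip ?_ hu hv fun x hx y hy hxy => ?_).elim hG hG'
  · by_cases h : markType Z u = markType Z v
    · exact .inl (by rw [h])
    · exact .inr (disjoint_filter.2 fun w _ hw => hw ▸ h)
  · simp only [mem_filter, mem_univ, true_and] at hx hy
    rw [perturbGraph_adj, countP_ofFn_congr_of_markType_eq hx hy]
    tauto

lemma nearlyOf_induce {G : FGraph} {W : Type} [Finite W] {G₀ G' : SimpleGraph W}
    (e : G.G ≃g G') (S : Set W) (hS : ∀ x ∈ S, ∀ y ∈ S, G₀.Adj x y ↔ G'.Adj x y) {h : ℕ}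
    (hcard : Nat.card ↥Sᶜ ≤ h) : NearlyOf h G { V := S, G := G₀.induce S } := by
  refine ⟨fun x => e.symm x, e.symm.injective.comp Subtype.val_injective,
    fun x y => (hS x x.2 y y.2).trans e.symm.map_adj_iff.symm, le_trans ?_ hcard⟩
  refine Nat.card_le_card_of_injective
    (fun v => ⟨e v.1, fun hv => v.2 ⟨⟨_, hv⟩, e.symm_apply_apply _⟩⟩) fun v w hvw => ?_
  exact Subtype.ext (e.injective (congrArg Subtype.val hvw))

theorem weakly_sparse_perturbation_nearly (C D : Set FGraph)
    (hC : WeaklySparse C) (hD : WeaklySparse D) (hher : HereditaryClass D)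
    (hP : IsPerturbationOfClass C D) :
    Nearly C D := by
  classical
  obtain ⟨tC, htC⟩ := hC
  obtain ⟨tD, htD⟩ := hD
  obtain ⟨p, hp⟩ := hP
  set t := max tC tD
  set N := 2 ^ (2 * t) * t + 2 * t
  refine ⟨2 ^ p * N, fun G hG => ?_⟩
  obtain ⟨G₀, hG₀, Z, ⟨e⟩⟩ := hp hG
  have : Fintype G₀.V := Fintype.ofFinite _
  set S : Set G₀.V := {v | N ≤ #{w | markType Z w = markType Z v}}
  have heven : ∀ u ∈ S, ∀ v ∈ S, Even ((List.ofFn Z).countP fun M => u ∈ M ∧ v ∈ M) :=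
    fun u hu v hv => even_countP_of_large_markTypes
      (fun h => htD G₀ hG₀ (h.mono (le_max_right _ _)))
      (fun h => htC G hG ((h.map e.symm.toHom e.symm.injective).mono (le_max_left _ _))) hu hv
  refine ⟨_, hher G₀ hG₀ _ ⟨Subtype.val, Subtype.val_injective, fun _ _ => Iff.rfl⟩,
    nearlyOf_induce e S (fun x hx y hy => ?_) ?_⟩
  · rw [perturbGraph_adj]
    exact ⟨fun h => ⟨h.ne, iff_of_true h (heven x hx y hy)⟩, fun h => h.2.2 (heven x hx y hy)⟩
  · calc Nat.card ↥Sᶜ = #{v | #{w | markType Z w = markType Z v} < N} := by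
          simp [S, Nat.card_eq_fintype_card, Fintype.card_subtype]
      _ ≤ Fintype.card (Set (Fin p)) * N := card_filter_card_fiber_lt_le _ _
      _ = 2 ^ p * N := by rw [Fintype.card_set, Fintype.card_fin]
end
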